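/- Let W = C₄ ≀ Sym(3), H = ⟨γ₁γ₂γ₃⟩ ≅ C₄, and G = ⟨x, y, Sym(3)⟩ where x = γ₁⁻¹γ₂²γ₃⁻¹ and y = γ₁⁻¹γ₂⁻¹γ₃². Then G ∩ H = {1}, G ≅ G(4,4,3), and W is the internal direct product of G and H. -/

import Mathlib

/-!
Let `π : C₄ ≀ Sym(3) → C₄` multiply the three coordinates of the base part; it is a homomorphism
because permuting coordinates does not change their product, and `G(4,4,3) = ker π`. The generators
`x`, `y` and `Sym(3)` of `G` lie in `ker π`. Conversely, `ker π` is generated by `Sym(3)` and the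
root vectors `γᵢγⱼ⁻¹`, which are `Sym(3)`-conjugates of `y x⁻¹ = γ₂γ₃⁻¹`, so `G = ker π`.
The subgroup `H` is the image of the diagonal embedding `δ : C₄ → W`, which is central, and
`π ∘ δ` is `a ↦ a³`, an automorphism of `C₄` because `gcd(3, 4) = 1`. Hence `ker π ∩ H = 1` and
`ker π · H = W`.
-/

open Multiplicative

/-- Cyclic group of order m, multiplicatively. -/
abbrev Cyc (m : ℕ) := Multiplicative (ZMod m)

/-- Minimal faithful permutation degree. -/
noncomputable def mu (G : Type*) [Group G] : ℕ :=
  sInf {n | ∃ f : G →* Equiv.Perm (Fin n), Function.Injective f}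

/-- Sym(n) acting on the base group (C_m)^n by permuting coordinates. -/
def wreathAut (m n : ℕ) : Equiv.Perm (Fin n) →* MulAut (Fin n → Cyc m) where
  toFun σ :=
    { toFun := fun θ => θ ∘ σ.symm
      invFun := fun θ => θ ∘ σ
      left_inv := fun θ => by ext i; simp
      right_inv := fun θ => by ext i; simp
      map_mul' := fun θ₁ θ₂ => rfl }
  map_one' := by ext θ i; rfl
  map_mul' := fun σ τ => by ext θ i; rfl

/-- The wreath product C_m ≀ Sym(n). -/
abbrev Wr (m n : ℕ) := SemidirectProduct (Fin n → Cyc m) (Equiv.Perm (Fin n)) (wreathAut m n)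

/-- A(m,p,n) = {θ ∈ (C_m)^n | (θ₁⋯θₙ)^{m/p} = 1}. -/
def Apn (m p n : ℕ) : Subgroup (Fin n → Cyc m) where
  carrier := {θ | (∏ i, θ i) ^ (m / p) = 1}
  one_mem' := by simp
  mul_mem' := by
    intro α β hα hβ
    simp only [Set.mem_setOf_eq, Pi.mul_apply] at *
    rw [Finset.prod_mul_distrib, mul_pow, hα, hβ, one_mul]
  inv_mem' := by
    intro α hα
    simp only [Set.mem_setOf_eq, Pi.inv_apply] at *
    rw [Finset.prod_inv_distrib, inv_pow, hα, inv_one]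

lemma apn_act_mem {m p n : ℕ} (σ : Equiv.Perm (Fin n)) {θ : Fin n → Cyc m}
    (hθ : θ ∈ Apn m p n) : wreathAut m n σ θ ∈ Apn m p n := by
  have : ∏ i, θ (σ.symm i) = ∏ i, θ i := Equiv.prod_comp σ.symm θ
  simpa [Apn, wreathAut, Subgroup.mem_mk, Set.mem_setOf_eq, Function.comp, this] using hθ

/-- G(m,p,n) = A(m,p,n) ⋊ Sym(n), realized inside C_m ≀ Sym(n). -/
def Gmpn (m p n : ℕ) : Subgroup (Wr m n) where
  carrier := {g | g.left ∈ Apn m p n}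
  one_mem' := by
    show (1 : Wr m n).left ∈ Apn m p n
    rw [SemidirectProduct.one_left]
    exact one_mem _
  mul_mem' := by
    intro g h hg hh
    show (g * h).left ∈ Apn m p n
    rw [SemidirectProduct.mul_left]
    exact mul_mem hg (apn_act_mem g.right hh)
  inv_mem' := by
    intro g hg
    show g⁻¹.left ∈ Apn m p n
    rw [SemidirectProduct.inv_left]
    exact apn_act_mem _ (inv_mem hg)

/-- x = γ₁⁻¹ γ₂² γ₃⁻¹ in the base group of C₄ ≀ Sym(3). -/
def xEl : Wr 4 3 := SemidirectProduct.inl (fun i => ofAdd ((![3, 2, 3] : Fin 3 → ZMod 4) i))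

/-- y = γ₁⁻¹ γ₂⁻¹ γ₃² in the base group of C₄ ≀ Sym(3). -/
def yEl : Wr 4 3 := SemidirectProduct.inl (fun i => ofAdd ((![3, 3, 2] : Fin 3 → ZMod 4) i))

/-- G = ⟨x, y, Sym(3)⟩ ≤ W. -/
def Gsub : Subgroup (Wr 4 3) :=
  Subgroup.closure ({xEl, yEl} ∪ Set.range (SemidirectProduct.inr))

/-- H = ⟨γ₁γ₂γ₃⟩ ≤ W. -/
def Hsub : Subgroup (Wr 4 3) :=
  Subgroup.closure {(SemidirectProduct.inl (fun _ => ofAdd 1) : Wr 4 3)}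

open SemidirectProduct

section General

variable {G A : Type*} [Group G] [Group A]

theorem Subgroup.normal_of_le_center {H : Subgroup G} (h : H ≤ Subgroup.center G) : H.Normal :=
  ⟨fun a ha g => by rwa [Subgroup.mem_center_iff.mp (h ha) g, mul_inv_cancel_right]⟩

theorem MonoidHom.ker_inf_range_eq_bot_of_injective_comp (f : G →* A) (s : A →* G)
    (h : Function.Injective (f.comp s)) : f.ker ⊓ s.range = ⊥ := by
  refine eq_bot_iff.mpr ?_
  rintro _ ⟨hf, a, rfl⟩
  have : a = 1 := h (by simpa using hf)
  simp [this]

theorem MonoidHom.ker_sup_range_eq_top_of_surjective_comp (f : G →* A) (s : A →* G)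
    (h : Function.Surjective (f.comp s)) : f.ker ⊔ s.range = ⊤ := by
  refine eq_top_iff.mpr fun g _ => ?_
  obtain ⟨a, ha⟩ := h (f g)
  have hker : g * (s a)⁻¹ ∈ f.ker := by simp_all
  simpa using
    mul_mem (Subgroup.mem_sup_left hker) (Subgroup.mem_sup_right (s.mem_range.mpr ⟨a, rfl⟩))

end General

namespace Cyc

theorem zpowers_ofAdd_one (m : ℕ) : Subgroup.zpowers (ofAdd 1 : Cyc m) = ⊤ := by
  refine eq_top_iff.mpr fun a _ => ?_
  obtain ⟨k, hk⟩ := ZMod.intCast_surjective (toAdd a)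
  exact ⟨k, show ofAdd 1 ^ k = a by rw [← ofAdd_zsmul, zsmul_one, hk, ofAdd_toAdd]⟩

theorem map_mem_of_map_ofAdd_one_mem {G : Type*} [Group G] {m : ℕ} {f : Cyc m →* G}
    {K : Subgroup G} (h : f (ofAdd 1) ∈ K) (a : Cyc m) : f a ∈ K := by
  have : Subgroup.zpowers (ofAdd 1 : Cyc m) ≤ K.comap f := Subgroup.zpowers_le.mpr h
  exact this (zpowers_ofAdd_one m ▸ Subgroup.mem_top a)

end Cyc

namespace Wr

variable {m n : ℕ}

def coordProd (m n : ℕ) : Wr m n →* Cyc m where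
  toFun g := ∏ i, g.left i
  map_one' := by simp
  map_mul' g h := by
    simp only [mul_left, Pi.mul_apply, Finset.prod_mul_distrib]
    congr 1
    exact Equiv.prod_comp _ h.left

theorem gmpn_self_eq_ker [NeZero m] : Gmpn m m n = (coordProd m n).ker := by
  ext g
  simp [Gmpn, Apn, coordProd, Nat.div_self (Nat.pos_of_neZero m)]

def diag (m n : ℕ) : Cyc m →* Wr m n :=
  inl.comp (MonoidHom.pi fun _ => MonoidHom.id _)

@[simp]
theorem diag_apply (a : Cyc m) : diag m n a = inl fun _ => a := rfl

theorem range_diag_le_center : (diag m n).range ≤ Subgroup.center (Wr m n) := by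
  rintro _ ⟨a, rfl⟩
  refine Subgroup.mem_center_iff.mpr fun g => SemidirectProduct.ext ?_ (by simp)
  funext i
  exact mul_comm (g.left i) a

theorem diag_injective [NeZero n] : Function.Injective (diag m n) := fun _ _ h =>
  congrFun (inl_injective (by simpa only [diag_apply] using h)) (0 : Fin n)

theorem coordProd_diag (a : Cyc m) : coordProd m n (diag m n a) = a ^ n := by
  simp [coordProd]

theorem closure_diag_ofAdd_one : Subgroup.closure {diag m n (ofAdd 1)} = (diag m n).range := by
  rw [← Subgroup.zpowers_eq_closure, ← MonoidHom.map_zpowers, Cyc.zpowers_ofAdd_one,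
    MonoidHom.range_eq_map]

theorem coordProd_comp_diag_bijective (h : m.Coprime n) :
    Function.Bijective ((coordProd m n).comp (diag m n)) := by
  have hcard : (Nat.card (Cyc m)).Coprime n := by
    rwa [Nat.card_congr toAdd, Nat.card_zmod]
  convert hcard.pow_left_bijective
  exact coordProd_diag _

end Wr

section WreathC4Sym3

open Wr

def rootHom (i j : Fin 3) : Cyc 4 →* (Fin 3 → Cyc 4) :=
  MonoidHom.mulSingle (fun _ => Cyc 4) i / MonoidHom.mulSingle (fun _ => Cyc 4) j

theorem eq_rootHom_mul_rootHom {θ : Fin 3 → Cyc 4} (h : ∏ i, θ i = 1) :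
    θ = rootHom 0 2 (θ 0) * rootHom 1 2 (θ 1) := by
  rw [Fin.prod_univ_three] at h
  funext i
  fin_cases i <;> simp [rootHom, eq_inv_of_mul_eq_one_right h, mul_comm]

theorem inl_rootHom_one_two_eq : (inl (rootHom 1 2 (ofAdd 1)) : Wr 4 3) = yEl * xEl⁻¹ := by
  rw [xEl, yEl, ← map_inv, ← map_mul]
  congr 1
  funext i
  fin_cases i <;> rfl

theorem rootHom_zero_two_eq (a : Cyc 4) :
    rootHom 0 2 a = wreathAut 4 3 (Equiv.swap 0 1) (rootHom 1 2 a) := by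
  funext i
  fin_cases i <;> simp [rootHom, wreathAut, Equiv.swap_apply_of_ne_of_ne]

theorem xEl_mem_gsub : xEl ∈ Gsub :=
  Subgroup.subset_closure (Or.inl (Or.inl rfl))

theorem yEl_mem_gsub : yEl ∈ Gsub :=
  Subgroup.subset_closure (Or.inl (Or.inr rfl))

theorem inr_mem_gsub (σ : Equiv.Perm (Fin 3)) : (inr σ : Wr 4 3) ∈ Gsub :=
  Subgroup.subset_closure (Or.inr ⟨σ, rfl⟩)

theorem inl_rootHom_one_two_mem_gsub (a : Cyc 4) : (inl (rootHom 1 2 a) : Wr 4 3) ∈ Gsub :=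
  Cyc.map_mem_of_map_ofAdd_one_mem (f := inl.comp (rootHom 1 2))
    (by simpa [inl_rootHom_one_two_eq] using mul_mem yEl_mem_gsub (inv_mem xEl_mem_gsub)) a

theorem inl_rootHom_zero_two_mem_gsub (a : Cyc 4) : (inl (rootHom 0 2 a) : Wr 4 3) ∈ Gsub := by
  rw [rootHom_zero_two_eq, inl_aut]
  exact mul_mem (mul_mem (inr_mem_gsub _) (inl_rootHom_one_two_mem_gsub a)) (inr_mem_gsub _)

theorem gsub_le_ker : Gsub ≤ (coordProd 4 3).ker := by
  rw [Gsub, Subgroup.closure_le]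
  rintro g ((rfl | rfl) | ⟨σ, rfl⟩)
  · exact (rfl : coordProd 4 3 xEl = 1)
  · exact (rfl : coordProd 4 3 yEl = 1)
  · simp [coordProd]

theorem ker_le_gsub : (coordProd 4 3).ker ≤ Gsub := by
  intro g hg
  rw [← inl_left_mul_inr_right g, eq_rootHom_mul_rootHom hg, map_mul]
  exact mul_mem (mul_mem (inl_rootHom_zero_two_mem_gsub _) (inl_rootHom_one_two_mem_gsub _))
    (inr_mem_gsub _)

end WreathC4Sym3

open Wr in
theorem stmt16 :
    Gsub ⊓ Hsub = ⊥ ∧ Nonempty (Gsub ≃* Gmpn 4 4 3) ∧ Nonempty (Hsub ≃* Cyc 4) ∧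
    Gsub.Normal ∧ Hsub.Normal ∧ Gsub ⊔ Hsub = ⊤ := by
  have hG : Gsub = (coordProd 4 3).ker := le_antisymm gsub_le_ker ker_le_gsub
  have hH : Hsub = (diag 4 3).range := closure_diag_ofAdd_one
  have hbij := coordProd_comp_diag_bijective (m := 4) (n := 3) (by norm_num)
  refine ⟨?_, ⟨MulEquiv.subgroupCongr (hG.trans gmpn_self_eq_ker.symm)⟩,
    ⟨(MulEquiv.subgroupCongr hH).trans (MonoidHom.ofInjective diag_injective).symm⟩, ?_, ?_, ?_⟩
  · rw [hG, hH]
    exact MonoidHom.ker_inf_range_eq_bot_of_injective_comp _ _ hbij.1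
  · rw [hG]
    exact MonoidHom.normal_ker _
  · exact Subgroup.normal_of_le_center (hH ▸ range_diag_le_center)
  · rw [hG, hH]
    exact MonoidHom.ker_sup_range_eq_top_of_surjective_comp _ _ hbij.2
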